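/- In an e-ring, two projections p,q commute (pq = qp) if and only if they are Mackey compatible in P, i.e., there exist projections p₁,q₁,d with d+p₁+q₁ ≤ 1, p = d+p₁, and q = d+q₁. -/

import Mathlib

/-- An e-ring: an associative unital ring `R` together with a set `E` of effects.
`E⁺` is the additive submonoid generated by `E` (the set of finite sums of effects). -/
structure ERing (R : Type*) [Ring R] where
  E : Set R
  zero_mem : (0:R) ∈ E
  one_mem : (1:R) ∈ E
  compl_mem : ∀ e ∈ E, 1 - e ∈ E
  ax_i : ∀ a ∈ AddSubmonoid.closure E, -a ∈ AddSubmonoid.closure E → a = 0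
  ax_ii : ∀ a ∈ AddSubmonoid.closure E, 1 - a ∈ AddSubmonoid.closure E → a ∈ E
  ax_iii : ∀ a ∈ AddSubmonoid.closure E, ∀ b ∈ AddSubmonoid.closure E,
    a * b = b * a → a * b ∈ AddSubmonoid.closure E
  ax_iv : ∀ a ∈ AddSubmonoid.closure E, ∀ b ∈ AddSubmonoid.closure E,
    a * b * a ∈ AddSubmonoid.closure E
  ax_v : ∀ a ∈ AddSubmonoid.closure E, ∀ b ∈ AddSubmonoid.closure E,
    a * b * a = 0 → a * b = 0 ∧ b * a = 0
  ax_vi : ∀ a ∈ AddSubmonoid.closure E, ∀ b ∈ AddSubmonoid.closure E,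
    (a - b) * (a - b) ∈ AddSubmonoid.closure E

namespace ERing

variable {R : Type*} [Ring R]

/-- The positive cone `E⁺`: all finite sums of effects. -/
def Ep (S : ERing R) : Set R := (AddSubmonoid.closure S.E : Set R)

/-- The directed group `G = E⁺ − E⁺` (as a subset of `R`). -/
def G (S : ERing R) : Set R := {x | ∃ a ∈ S.Ep, ∃ b ∈ S.Ep, x = a - b}

/-- The partial order with positive cone `E⁺`: `g ≤ h` iff `h − g ∈ E⁺`. -/
def le (S : ERing R) (g h : R) : Prop := h - g ∈ S.Ep

/-- The set of projections: idempotent elements of `G`. -/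
def P (S : ERing R) : Set R := {p | p ∈ S.G ∧ p * p = p}

end ERing


/-!
If `p` and `q` commute, the products `pq`, `p(1 - q)`, `(1 - p)q` and `(1 - p)(1 - q)` are
projections (axiom (iii)), and they split `p`, `q` and `1` as required. Conversely, projections
with `d + p₁ + q₁ ≤ 1` are pairwise orthogonal: for `a` idempotent with `a + b ≤ 1`, the element
`a(1 - a - b)a = -aba` lies in `E⁺` together with `aba`, so `aba = 0` and axiom (v) gives
`ab = ba = 0`. Then `(d + p₁)(d + q₁) = d = (d + q₁)(d + p₁)`.
-/

namespace ERing

variable {R : Type*} [Ring R] (S : ERing R) {a b c p q : R}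

lemma add_mem_Ep (ha : a ∈ S.Ep) (hb : b ∈ S.Ep) : a + b ∈ S.Ep :=
  AddSubmonoid.add_mem _ ha hb

lemma one_mem_Ep : (1 : R) ∈ S.Ep :=
  AddSubmonoid.subset_closure S.one_mem

lemma mem_G_of_mem_Ep (ha : a ∈ S.Ep) : a ∈ S.G :=
  ⟨a, ha, 0, AddSubmonoid.zero_mem _, (sub_zero a).symm⟩

lemma mem_P_of_mem_Ep (ha : a ∈ S.Ep) (ha2 : IsIdempotentElem a) : a ∈ S.P :=
  ⟨S.mem_G_of_mem_Ep ha, ha2⟩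

lemma isIdempotentElem_of_mem_P (hp : p ∈ S.P) : IsIdempotentElem p := hp.2

lemma mem_Ep_of_mem_P (hp : p ∈ S.P) : p ∈ S.Ep := by
  obtain ⟨⟨a, ha, b, hb, rfl⟩, hp2⟩ := hp
  have h := S.ax_vi a ha b hb
  rw [hp2] at h
  exact h

lemma one_sub_mem_P (hp : p ∈ S.P) : 1 - p ∈ S.P := by
  refine S.mem_P_of_mem_Ep ?_ (S.isIdempotentElem_of_mem_P hp).one_sub
  have h := S.ax_vi 1 S.one_mem_Ep p (S.mem_Ep_of_mem_P hp)
  rw [(S.isIdempotentElem_of_mem_P hp).one_sub.eq] at h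
  exact h

lemma mul_mem_P_of_commute (hp : p ∈ S.P) (hq : q ∈ S.P) (hpq : Commute p q) :
    p * q ∈ S.P :=
  S.mem_P_of_mem_Ep (S.ax_iii p (S.mem_Ep_of_mem_P hp) q (S.mem_Ep_of_mem_P hq) hpq)
    ((S.isIdempotentElem_of_mem_P hp).mul_of_commute hpq (S.isIdempotentElem_of_mem_P hq))

lemma le_of_add_le (hb : b ∈ S.Ep) (h : S.le (a + b) c) : S.le a c := by
  have e : c - a = (c - (a + b)) + b := by abel
  show c - a ∈ S.Ep
  exact e ▸ S.add_mem_Ep h hb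

lemma mul_eq_zero_of_add_le_one (hp : p ∈ S.P) (hb : b ∈ S.Ep) (h : S.le (p + b) 1) :
    p * b = 0 ∧ b * p = 0 := by
  have hpE := S.mem_Ep_of_mem_P hp
  have hpbp : p * b * p ∈ S.Ep := S.ax_iv p hpE b hb
  have hneg : -(p * b * p) ∈ S.Ep := by
    have e : p * (1 - (p + b)) * p = -(p * b * p) := by
      have e' : p * (1 - (p + b)) * p = p * p - p * p * p - p * b * p := by noncomm_ring
      rw [e', hp.2, hp.2]; abel
    exact e ▸ S.ax_iv p hpE _ h
  exact S.ax_v p hpE b hb (S.ax_i _ hpbp hneg)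

lemma exists_decomposition_of_commute (hp : p ∈ S.P) (hq : q ∈ S.P) (hpq : Commute p q) :
    ∃ d ∈ S.P, ∃ p₁ ∈ S.P, ∃ q₁ ∈ S.P, S.le (d + p₁ + q₁) 1 ∧ p = d + p₁ ∧ q = d + q₁ := by
  have hp' := S.one_sub_mem_P hp
  have hq' := S.one_sub_mem_P hq
  refine ⟨p * q, S.mul_mem_P_of_commute hp hq hpq,
    p * (1 - q), S.mul_mem_P_of_commute hp hq' ((Commute.one_right p).sub_right hpq),
    (1 - p) * q, S.mul_mem_P_of_commute hp' hq ((Commute.one_left q).sub_left hpq), ?_,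
    by noncomm_ring, by noncomm_ring⟩
  have hrest : (1 - p) * (1 - q) ∈ S.Ep := S.mem_Ep_of_mem_P <| S.mul_mem_P_of_commute hp' hq' <|
    (Commute.one_right _).sub_right ((Commute.one_left q).sub_left hpq)
  have e : 1 - (p * q + p * (1 - q) + (1 - p) * q) = (1 - p) * (1 - q) := by noncomm_ring
  show 1 - _ ∈ S.Ep
  exact e ▸ hrest

lemma commute_of_add_add_le_one {d p₁ q₁ : R} (hd : d ∈ S.P) (hp₁ : p₁ ∈ S.P) (hq₁ : q₁ ∈ S.P)
    (h : S.le (d + p₁ + q₁) 1) : Commute (d + p₁) (d + q₁) := by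
  have hdE := S.mem_Ep_of_mem_P hd
  have hp₁E := S.mem_Ep_of_mem_P hp₁
  have hq₁E := S.mem_Ep_of_mem_P hq₁
  obtain ⟨hdp, hpd⟩ := S.mul_eq_zero_of_add_le_one hd hp₁E (S.le_of_add_le hq₁E h)
  obtain ⟨hdq, hqd⟩ := S.mul_eq_zero_of_add_le_one hd hq₁E
    (S.le_of_add_le hp₁E (by rwa [add_right_comm] at h))
  obtain ⟨hpq, hqp⟩ := S.mul_eq_zero_of_add_le_one hp₁ hq₁E
    (S.le_of_add_le hdE (by rwa [add_rotate] at h))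
  calc (d + p₁) * (d + q₁) = d * d + d * q₁ + p₁ * d + p₁ * q₁ := by noncomm_ring
    _ = d * d + d * p₁ + q₁ * d + q₁ * p₁ := by rw [hdp, hpd, hdq, hqd, hpq, hqp]
    _ = (d + q₁) * (d + p₁) := by noncomm_ring

end ERing

theorem stmt17 {R : Type*} [Ring R] (S : ERing R) :
    ∀ p ∈ S.P, ∀ q ∈ S.P,
      (p * q = q * p ↔
        ∃ d ∈ S.P, ∃ p₁ ∈ S.P, ∃ q₁ ∈ S.P,
          S.le (d + p₁ + q₁) 1 ∧ p = d + p₁ ∧ q = d + q₁) := by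
  intro p hp q hq
  constructor
  · exact S.exists_decomposition_of_commute hp hq
  · rintro ⟨d, hd, p₁, hp₁, q₁, hq₁, h, rfl, rfl⟩
    exact S.commute_of_add_add_le_one hd hp₁ hq₁ h
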